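/- If X and Y are Hermitian positive semi-definite matrices with X ≤ Y in the Loewner order, then X∨Y = Y. -/

import Mathlib

open scoped Matrix Matrix.Norms.L2Operator ComplexOrder

/-- The positive semidefinite square root of a positive semidefinite matrix
(as defined in Mathlib of December 2024, since removed). -/
noncomputable def Matrix.PosSemidef.sqrt {n 𝕜 : Type*} [RCLike 𝕜] [Fintype n] [DecidableEq n]
    {A : Matrix n n 𝕜} (hA : A.PosSemidef) : Matrix n n 𝕜 :=
  hA.1.eigenvectorUnitary.1 * Matrix.diagonal ((↑) ∘ (√·) ∘ hA.1.eigenvalues) *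
    (star hA.1.eigenvectorUnitary : Matrix n n 𝕜)

/-- `MPInv A B` means `B` is the Moore-Penrose inverse of `A`. -/
def MPInv {n : ℕ} (A B : Matrix (Fin n) (Fin n) ℂ) : Prop :=
  A * B * A = A ∧ B * A * B = B ∧ (A * B).IsHermitian ∧ (B * A).IsHermitian

/-!
Write `s = X + Y` and `d = Y - X`. Since `0 ≤ d ≤ s`, the range of `d` lies in that of `s`, so `d`
is fixed on both sides by the projection `p = s s†`. This gives `4 X s† Y = s - d s† d`, hence
`W = ((s†)^{1/2} d (s†)^{1/2} / 2)²`. Moreover `s^{1/2} (s†)^{1/2}` is a nonnegative square root of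
the projection `p`, so it equals `p`, and `s^{1/2} W^{1/2} s^{1/2} = p d p / 2 = d / 2`. Thus
`X ∨ Y = (s + d) / 2 = Y`.
-/

open scoped MatrixOrder in
lemma Matrix.PosSemidef.sqrt_eq_cfcSqrt {n 𝕜 : Type*} [RCLike 𝕜] [Fintype n] [DecidableEq n]
    {A : Matrix n n 𝕜} (hA : A.PosSemidef) : hA.sqrt = CFC.sqrt A := by
  rw [CFC.sqrt_eq_real_sqrt A hA.nonneg, cfcₙ_eq_cfc, hA.1.cfc_eq, Matrix.IsHermitian.cfc,
    Unitary.conjStarAlgAut_apply]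
  rfl

theorem sub_mul_mul_add_eq {R : Type*} [Ring R] {s d t : R} (hs : s * t * s = s)
    (hd : d * (t * s) = d) (hd' : s * t * d = d) : (s - d) * t * (s + d) = s - d * t * d :=
  calc (s - d) * t * (s + d) = s * t * s + s * t * d - d * (t * s) - d * t * d := by noncomm_ring
    _ = s - d * t * d := by rw [hs, hd, hd']; abel

section CStarAlgebra

variable {A : Type*} [CStarAlgebra A] [PartialOrder A] [StarOrderedRing A]

lemma mul_eq_zero_of_star_mul_mul_eq_zero {a b : A} (ha : 0 ≤ a) (h : star b * a * b = 0) :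
    a * b = 0 := by
  obtain ⟨c, rfl⟩ := CStarAlgebra.nonneg_iff_eq_star_mul_self.mp ha
  have hcb : c * b = 0 := by
    rw [← CStarRing.star_mul_self_eq_zero_iff, star_mul, ← h]
    simp only [mul_assoc]
  rw [mul_assoc, hcb, mul_zero]

lemma mul_eq_self_of_le_of_mul_eq_self {d s p : A} (hd : 0 ≤ d) (hds : d ≤ s)
    (hsp : s * p = s) : d * p = d := by
  have hs : star (1 - p) * s * (1 - p) = 0 := by
    rw [mul_assoc, mul_sub, mul_one, hsp, sub_self, mul_zero]
  have hd0 : star (1 - p) * d * (1 - p) = 0 :=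
    le_antisymm (hs ▸ star_left_conjugate_le_conjugate hds _) (star_left_conjugate_nonneg hd _)
  have := mul_eq_zero_of_star_mul_mul_eq_zero hd hd0
  rwa [mul_sub, mul_one, sub_eq_zero, eq_comm] at this

lemma CFC.sqrt_mul_sqrt_eq_mul_of_isIdempotentElem {a b : A} (ha : 0 ≤ a) (hb : 0 ≤ b)
    (hab : Commute a b) (hidem : IsIdempotentElem (a * b)) :
    CFC.sqrt a * CFC.sqrt b = a * b := by
  have hc : Commute (CFC.sqrt a) (CFC.sqrt b) :=
    ((hab.cfcₙ_nnreal NNReal.sqrt).symm.cfcₙ_nnreal NNReal.sqrt).symm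
  rw [← CFC.mul_self_eq_mul_self_iff _ _ (hc.mul_nonneg (CFC.sqrt_nonneg a) (CFC.sqrt_nonneg b))
    (hab.mul_nonneg ha hb), hidem.eq, hc.symm.mul_mul_mul_comm, CFC.sqrt_mul_sqrt_self a,
    CFC.sqrt_mul_sqrt_self b]

lemma add_self_eq_of_mul_self_eq {w r d s' m : A} (hw : 0 ≤ w) (hr : 0 ≤ r) (hd : 0 ≤ d)
    (hr2 : r * r = s') (hm : (4 : ℂ) • m = d * s' * d) (hw2 : w * w = r * m * r) :
    w + w = r * d * r := by
  rw [← CFC.mul_self_eq_mul_self_iff _ _ (add_nonneg hw hw) (conjugate_nonneg_of_nonneg hd hr)]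
  calc (w + w) * (w + w) = r * ((4 : ℂ) • m) * r := by
        rw [mul_smul_comm, smul_mul_assoc, ← hw2]
        simp only [add_mul, mul_add]
        module
    _ = r * d * r * (r * d * r) := by rw [hm, ← hr2]; simp only [mul_assoc]

theorem sup_formula_eq_right_of_le {x y s' r w : A} (hx : 0 ≤ x) (hxy : x ≤ y)
    (hs' : (x + y) * s' * (x + y) = x + y) (hss' : IsSelfAdjoint ((x + y) * s'))
    (hr : 0 ≤ r) (hr2 : r * r = s') (hw : 0 ≤ w)
    (hw2 : w * w = r * ((4 : ℂ)⁻¹ • (x + y) - x * s' * y) * r) :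
    (2 : ℂ)⁻¹ • (x + y) + CFC.sqrt (x + y) * w * CFC.sqrt (x + y) = y := by
  set s := x + y with hs_def
  set d := y - x with hd_def
  have hs : 0 ≤ s := add_nonneg hx (hx.trans hxy)
  have hd : 0 ≤ d := sub_nonneg.mpr hxy
  have hds : d ≤ s := by
    rw [← sub_nonneg, show s - d = x + x by rw [hs_def, hd_def]; abel]
    exact add_nonneg hx hx
  have hs'0 : 0 ≤ s' := hr2 ▸ (Commute.refl r).mul_nonneg hr hr
  have hcomm : Commute s s' := (hs.isSelfAdjoint.commute_iff hs'0.isSelfAdjoint).mpr hss'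
  have hdp : d * (s' * s) = d := mul_eq_self_of_le_of_mul_eq_self hd hds (by rw [← mul_assoc, hs'])
  have hpd : s * s' * d = d := by
    simpa [star_mul, hd.isSelfAdjoint.star_eq, hs.isSelfAdjoint.star_eq,
      hs'0.isSelfAdjoint.star_eq, mul_assoc] using congrArg star hdp
  have ht : CFC.sqrt s * r = s * s' := by
    rw [← CFC.sqrt_unique hr2 hr]
    exact CFC.sqrt_mul_sqrt_eq_mul_of_isIdempotentElem hs hs'0 hcomm
      (by rw [IsIdempotentElem, ← mul_assoc, hs'])
  have htr : Commute (CFC.sqrt s) r :=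
    ((CFC.sqrt_nonneg s).isSelfAdjoint.commute_iff hr.isSelfAdjoint).mpr (ht ▸ hss')
  have hxs'y : (4 : ℂ) • (x * s' * y) = s - d * s' * d := by
    rw [← sub_mul_mul_add_eq hs' hdp hpd, show s - d = x + x by rw [hs_def, hd_def]; abel,
      show s + d = y + y by rw [hs_def, hd_def]; abel]
    simp only [add_mul, mul_add]
    module
  have hw_eq : w + w = r * d * r := by
    refine add_self_eq_of_mul_self_eq hw hr hd hr2 ?_ hw2
    rw [smul_sub, smul_smul, hxs'y]
    norm_num
  have hconj : CFC.sqrt s * (w + w) * CFC.sqrt s = d :=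
    calc CFC.sqrt s * (w + w) * CFC.sqrt s
        = CFC.sqrt s * r * d * (r * CFC.sqrt s) := by rw [hw_eq]; simp only [mul_assoc]
      _ = d := by rw [← htr.eq, ht, hpd, hcomm.eq, hdp]
  have hhalf : CFC.sqrt s * w * CFC.sqrt s = (2 : ℂ)⁻¹ • d := by
    rw [← hconj]
    simp only [mul_add, add_mul]
    module
  rw [hhalf, ← smul_add, hs_def, hd_def]
  module

end CStarAlgebra

/-- If X ≤ Y in the Loewner order, then X∨Y = Y. -/
theorem sup_of_le {n : ℕ} (X Y Sd Sdh Wh : Matrix (Fin n) (Fin n) ℂ)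
    (hX : X.PosSemidef) (hY : Y.PosSemidef) (hle : (Y - X).PosSemidef)
    (hSd : MPInv (X + Y) Sd)
    (hSdh : Sdh.PosSemidef) (hSdh2 : Sdh * Sdh = Sd)
    (hWh : Wh.PosSemidef)
    (hWh2 : Wh * Wh = Sdh * ((4 : ℂ)⁻¹ • (X + Y) - X * Sd * Y) * Sdh) :
    (2 : ℂ)⁻¹ • (X + Y) + (hX.add hY).sqrt * Wh * (hX.add hY).sqrt = Y := by
  open scoped MatrixOrder in
  exact (hX.add hY).sqrt_eq_cfcSqrt ▸
    sup_formula_eq_right_of_le hX.nonneg hle hSd.1 hSd.2.2.1 hSdh.nonneg hSdh2 hWh.nonneg hWh2
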